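/- Let i ∈ [1,n], j ∈ [1,i), k ∈ [1,j], b = low(i), and c = low(j). If either (j < b and j < low(x) for some x ∈ (j,b)) or (k < min{b,c} and k ≤ low(x) for some x ∈ [k, min{b,c})), then γ^1_{[1,2]}(k,i:i,j) = ∞ (i.e., is not defined: there is no [1,2]-dominating set D of G[1,i] with i,j ∈ D and D ∩ ([k,i)\{j}) = ∅). -/

import Mathlib

/-- `G` is a graph with vertex set `{1,…,n}` (all edges lie inside `{1,…,n}`),
whose adjacency satisfies the interval-graph numbering property: whenever
`i < j < k` and `i` is adjacent to `k`, then `j` is adjacent to `k`. -/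
def GoodNumbering (G : SimpleGraph ℕ) (n : ℕ) : Prop :=
  (∀ u v : ℕ, G.Adj u v → u ∈ Finset.Icc 1 n ∧ v ∈ Finset.Icc 1 n) ∧
  (∀ i j k : ℕ, i < j → j < k → G.Adj i k → G.Adj j k)

/-- `low a = min N[a]`, the minimum of the closed neighborhood of `a`. -/
noncomputable def low (G : SimpleGraph ℕ) (a : ℕ) : ℕ :=
  sInf {b : ℕ | b = a ∨ G.Adj a b}

/-- `lowI a b = min {low k : k ∈ [a,b]}`. -/
noncomputable def lowI (G : SimpleGraph ℕ) (a b : ℕ) : ℕ :=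
  sInf (low G '' Set.Icc a b)

/-- `maxlow a = max {low k : low a ≤ k ≤ a}`. -/
noncomputable def maxlow (G : SimpleGraph ℕ) (a : ℕ) : ℕ :=
  sSup (low G '' Set.Icc (low G a) a)

/-- `D` is a `[1,2]`-dominating set of the induced subgraph `G[1,i]`:
`D ⊆ [1,i]` and every vertex of `[1,i]` outside `D` has at least one and at
most two neighbors in `D`. -/
def Dom12 (G : SimpleGraph ℕ) (i : ℕ) (D : Finset ℕ) : Prop :=
  D ⊆ Finset.Icc 1 i ∧
  ∀ v ∈ Finset.Icc 1 i, v ∉ D →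
    1 ≤ {u ∈ (D : Set ℕ) | G.Adj v u}.ncard ∧ {u ∈ (D : Set ℕ) | G.Adj v u}.ncard ≤ 2

/-- The minimum (in `ℕ∞`, with `sInf ∅ = ⊤`) of the cardinalities of the
`[1,2]`-dominating sets `D` of `G[1,i]` satisfying the extra property `P`. -/
noncomputable def gval (G : SimpleGraph ℕ) (i : ℕ) (P : Finset ℕ → Prop) : ℕ∞ :=
  sInf {k : ℕ∞ | ∃ D : Finset ℕ, Dom12 G i D ∧ P D ∧ (D.card : ℕ∞) = k}

/-- `γ_{[1,2]}(i)`. -/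
noncomputable def g12 (G : SimpleGraph ℕ) (i : ℕ) : ℕ∞ :=
  gval G i fun _ => True

/-- `γ⁰_{[1,2]}(j,i)`: no vertex of `[j,i]` is in `D`. -/
noncomputable def g0I (G : SimpleGraph ℕ) (j i : ℕ) : ℕ∞ :=
  gval G i fun D => ∀ x ∈ Finset.Icc j i, x ∉ D

/-- `γ⁰_{[1,2]}(j,i:k)`: `k ∈ D` and no other vertex of `[j,i]` is in `D`. -/
noncomputable def g0Ik (G : SimpleGraph ℕ) (j i k : ℕ) : ℕ∞ :=
  gval G i fun D => k ∈ D ∧ ∀ x ∈ Finset.Icc j i, x ≠ k → x ∉ D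

/-- `γ¹_{[1,2]}(i)`: `i ∈ D`. -/
noncomputable def g1 (G : SimpleGraph ℕ) (i : ℕ) : ℕ∞ :=
  gval G i fun D => i ∈ D

/-- `γ¹_{[1,2]}(j,i:i)`: `i ∈ D` and no vertex of `[j,i)` is in `D`. -/
noncomputable def g1I (G : SimpleGraph ℕ) (j i : ℕ) : ℕ∞ :=
  gval G i fun D => i ∈ D ∧ ∀ x ∈ Finset.Ico j i, x ∉ D

/-- `γ¹_{[1,2]}(k,i:i,j)`: `i, j ∈ D` and no other vertex of `[k,i)` is in `D`. -/
noncomputable def g1Ij (G : SimpleGraph ℕ) (k i j : ℕ) : ℕ∞ :=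
  gval G i fun D => i ∈ D ∧ j ∈ D ∧ ∀ x ∈ Finset.Ico k i, x ≠ j → x ∉ D

/-- `γ¹_{[1,2]}(l,i:i,j,k)`: `i, j, k ∈ D` and no other vertex of `[l,i)` is in `D`. -/
noncomputable def g1Ijk (G : SimpleGraph ℕ) (l i j k : ℕ) : ℕ∞ :=
  gval G i fun D => i ∈ D ∧ j ∈ D ∧ k ∈ D ∧ ∀ x ∈ Finset.Ico l i, x ≠ j → x ≠ k → x ∉ D

/-- `γ¹¹_{[1,2]}(l,i:i,j,k)`: `i, j ∈ D`, all of `[l,k] ⊆ D`, and no vertex of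
`(k,i)` other than `j` is in `D`. -/
noncomputable def g11Ijk (G : SimpleGraph ℕ) (l i j k : ℕ) : ℕ∞ :=
  gval G i fun D => i ∈ D ∧ j ∈ D ∧ (∀ x ∈ Finset.Icc l k, x ∈ D) ∧
    ∀ x ∈ Finset.Ioo k i, x ≠ j → x ∉ D


/-!
An admissible `D` lies in `[1,i]` and meets `[k,i]` only in `i` and `j`. A vertex `x` with
`k ≤ low x` has all its neighbours in `[low x, i] ⊆ [k, i]`, so inside `G[1,i]` it can only be
dominated by `i` or by `j`. Under either hypothesis there is such an `x ∉ D`, with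
`k ≤ x < low i` (so `x` is not adjacent to `i`), which is not adjacent to `j` either: in the
first case because `j < low x`, in the second because `x < low j`. So `x` is undominated.
-/

section Low

variable {G : SimpleGraph ℕ}

theorem low_le_self (a : ℕ) : low G a ≤ a :=
  Nat.sInf_le (Or.inl rfl)

theorem low_le_of_adj {a u : ℕ} (h : G.Adj a u) : low G a ≤ u :=
  Nat.sInf_le (Or.inr h)

theorem not_adj_of_lt_low {a u : ℕ} (h : u < low G a) : ¬G.Adj a u :=
  fun hadj => (low_le_of_adj hadj).not_gt h

end Low

theorem Dom12.exists_adj {G : SimpleGraph ℕ} {i : ℕ} {D : Finset ℕ} (hD : Dom12 G i D)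
    {x : ℕ} (hx : x ∈ Finset.Icc 1 i) (hxD : x ∉ D) : ∃ u ∈ D, G.Adj x u :=
  Set.nonempty_of_ncard_ne_zero (Nat.one_le_iff_ne_zero.mp (hD.2 x hx hxD).1)

theorem g1Ij_eq_top_of_exists_undominated {G : SimpleGraph ℕ} {k i j : ℕ}
    (h : ∃ x, 1 ≤ x ∧ k ≤ low G x ∧ x < low G i ∧ x ≠ j ∧ ¬G.Adj x j) :
    g1Ij G k i j = ⊤ := by
  obtain ⟨x, hx1, hkx, hxi, hxj, hnadj⟩ := h
  have hxi' : x < i := hxi.trans_le (low_le_self i)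
  rw [g1Ij, gval, sInf_eq_top]
  rintro _ ⟨D, hD, ⟨-, -, hno⟩, -⟩
  exfalso
  have hxD : x ∉ D :=
    hno x (Finset.mem_Ico.mpr ⟨hkx.trans (low_le_self x), hxi'⟩) hxj
  obtain ⟨u, huD, hadj⟩ := hD.exists_adj (Finset.mem_Icc.mpr ⟨hx1, hxi'.le⟩) hxD
  have hku : k ≤ u := hkx.trans (low_le_of_adj hadj)
  obtain rfl | hui := (Finset.mem_Icc.mp (hD.1 huD)).2.eq_or_lt
  · exact absurd (low_le_of_adj hadj.symm) hxi.not_ge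
  · by_cases huj : u = j
    · exact hnadj (huj ▸ hadj)
    · exact absurd huD (hno u (Finset.mem_Ico.mpr ⟨hku, hui⟩) huj)

theorem g1Ij_eq_top_general (G : SimpleGraph ℕ) (i j k b c : ℕ)
    (hk : k ∈ Finset.Icc 1 j)
    (hbdef : b = low G i) (hcdef : c = low G j)
    (hcond : (j < b ∧ ∃ x ∈ Finset.Ioo j b, j < low G x) ∨
             (k < min b c ∧ ∃ x ∈ Finset.Ico k (min b c), k ≤ low G x)) :
    g1Ij G k i j = ⊤ := by
  subst hbdef hcdef
  simp only [Finset.mem_Icc, Finset.mem_Ico, Finset.mem_Ioo, lt_min_iff] at hk hcond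
  apply g1Ij_eq_top_of_exists_undominated
  rcases hcond with ⟨-, x, ⟨hjx, hxb⟩, hjlx⟩ | ⟨-, x, ⟨hkx, hxb, hxc⟩, hklx⟩
  · exact ⟨x, by omega, by omega, hxb, by omega, not_adj_of_lt_low hjlx⟩
  · have hxj : x < j := hxc.trans_le (low_le_self j)
    exact ⟨x, by omega, hklx, hxb, hxj.ne, fun hadj => not_adj_of_lt_low hxc hadj.symm⟩

/-- Lemma (i): with `b = low(i)` and `c = low(j)`, if either (`j < b` and
`j < low(x)` for some `x ∈ (j,b)`) or (`k < min b c` and `k ≤ low(x)` for some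
`x ∈ [k, min b c)`), then `γ¹_{[1,2]}(k,i:i,j)` is not defined (equals `⊤`). -/
theorem g1Ij_eq_top (G : SimpleGraph ℕ) (n : ℕ) (hn : 1 ≤ n)
    (hG : GoodNumbering G n) (i j k b c : ℕ) (hi : i ∈ Finset.Icc 1 n)
    (hj : j ∈ Finset.Ico 1 i) (hk : k ∈ Finset.Icc 1 j)
    (hbdef : b = low G i) (hcdef : c = low G j)
    (hcond : (j < b ∧ ∃ x ∈ Finset.Ioo j b, j < low G x) ∨
             (k < min b c ∧ ∃ x ∈ Finset.Ico k (min b c), k ≤ low G x)) :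
    g1Ij G k i j = ⊤ :=
  g1Ij_eq_top_general G i j k b c hk hbdef hcdef hcond
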